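/- arXiv:2309.12515 — 2 statements merged into one kernel-verified Lean document; each statement's English description precedes it below -/
import Mathlib

section
/- Sufficient condition for implementations: suppose the machine and the strategy form an implementation system. Then (a) runs to evaluations with β-matching: for every term t, every state s with t ◦ s, and every run s →* s' (with → := →β ∪ →o) containing exactly k β-transitions, there is an evaluation t ⇒^k ⟦s'⟧ of length k; and (b) evaluations to runs with β-matching: for every evaluation t ⇒^k u and every state s with t ◦ s, there is a state s' such that s ((→o)* ; →β)^k s' and ⟦s'⟧ = u. -/
/-- `NSteps r k a b`: a sequence of exactly `k` `r`-steps from `a` to `b`. -/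
inductive NSteps {α : Type*} (r : α → α → Prop) : ℕ → α → α → Prop
  | refl (a : α) : NSteps r 0 a a
  | step {a b c : α} {n : ℕ} : r a b → NSteps r n b c → NSteps r (n + 1) a c

/-- `Run b o k s s'`: a run made of `b`- and `o`-transitions from `s` to `s'`
containing exactly `k` `b`-transitions. -/
inductive Run {α : Type*} (b o : α → α → Prop) : ℕ → α → α → Prop
  | refl (a : α) : Run b o 0 a a
  | beta {a a' c : α} {k : ℕ} : b a a' → Run b o k a' c → Run b o (k + 1) a c
  | ov {a a' c : α} {k : ℕ} : o a a' → Run b o k a' c → Run b o k a c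

/-- sufficient condition for implementations.  If a machine
(with β-transitions `betaT`, overhead transitions `oT`, initialization `init`
and read-back `rb`) and a strategy `strat` form an implementation system, then
(a) runs to evaluations with β-matching, and (b) evaluations to runs with
β-matching. -/
theorem sufficient_condition_for_implementations
    {Terms States : Type*}
    (betaT oT : States → States → Prop) (strat : Terms → Terms → Prop)
    (init : Terms → States → Prop) (rb : States → Terms)
    -- initialization constraint
    (hinit : ∀ t s, init t s → rb s = t)
    -- (1) overhead transparency
    (htransp : ∀ s s', oT s s' → rb s = rb s')
    -- (2) β-projection
    (hproj : ∀ s s', betaT s s' → strat (rb s) (rb s'))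
    -- (3) overhead termination: no infinite `oT`-sequence
    (hterm : ¬ ∃ f : ℕ → States, ∀ n, oT (f n) (f (n + 1)))
    -- (4) β-reflection
    (hrefl : ∀ s u, (∀ s', ¬ oT s s') → strat (rb s) u →
      ∃ s', betaT s s' ∧ rb s' = u) :
    -- (a) runs to evaluations with β-matching
    ((∀ (t : Terms) (s s' : States) (k : ℕ), init t s → Run betaT oT k s s' →
        NSteps strat k t (rb s')) ∧
    -- (b) evaluations to runs with β-matching
     (∀ (t u : Terms) (k : ℕ), NSteps strat k t u → ∀ s, init t s →
        ∃ s', NSteps (fun a c => ∃ m, Relation.ReflTransGen oT a m ∧ betaT m c) k s s' ∧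
          rb s' = u)) := by
  -- rb is invariant along overhead chains
  have hchain : ∀ {a c : States}, Relation.ReflTransGen oT a c → rb a = rb c := by
    intro a c h
    induction h with
    | refl => rfl
    | tail _ hb ih => exact ih.trans (htransp _ _ hb)
  -- every state reaches an oT-normal form
  have key : ∀ s : States, ∃ s', Relation.ReflTransGen oT s s' ∧ ∀ x, ¬ oT s' x := by
    intro s
    by_contra h
    push_neg at h
    apply hterm
    -- h : ∀ s', Relation.ReflTransGen oT s s' → ∃ x, oT s' x
    choose g hg using h
    let F : ℕ → {x : States // Relation.ReflTransGen oT s x} := fun n =>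
      Nat.rec ⟨s, Relation.ReflTransGen.refl⟩
        (fun _ p => ⟨g p.1 p.2, p.2.tail (hg p.1 p.2)⟩) n
    exact ⟨fun n => (F n).1, fun n => hg (F n).1 (F n).2⟩
  constructor
  · -- (a)
    have main : ∀ (k : ℕ) (s s' : States), Run betaT oT k s s' →
        NSteps strat k (rb s) (rb s') := by
      intro k s s' h
      induction h with
      | refl a => exact NSteps.refl _
      | beta hb _ ih => exact NSteps.step (hproj _ _ hb) ih
      | ov ho _ ih => rw [htransp _ _ ho]; exact ih
    intro t s s' k hi hr
    have := main k s s' hr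
    rwa [hinit t s hi] at this
  · -- (b)
    have main : ∀ (k : ℕ) (t u : Terms), NSteps strat k t u → ∀ s, rb s = t →
        ∃ s', NSteps (fun a c => ∃ m, Relation.ReflTransGen oT a m ∧ betaT m c) k s s' ∧
          rb s' = u := by
      intro k t u h
      induction h with
      | refl a => exact fun s hs => ⟨s, NSteps.refl _, hs⟩
      | @step a b c n hab _ ih =>
        intro s hs
        obtain ⟨m, hsm, hnorm⟩ := key s
        have hrm : rb m = a := (hchain hsm).symm.trans hs
        obtain ⟨s1, hb, hrb1⟩ := hrefl m b hnorm (hrm ▸ hab)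
        obtain ⟨s', hns, hrs'⟩ := ih s1 hrb1
        exact ⟨s', NSteps.step ⟨m, hsm, hb⟩ hns, hrs'⟩
    exact fun t u k h s hi => main k t u h s (hinit t s hi)
end

section
/- One-step simulation: suppose the machine and the strategy form an implementation system. Then for any state s, if ⟦s⟧ ⇒ u then there exists a state s' such that s (→o)* ; →β s' and ⟦s'⟧ = u. -/
/-- one-step simulation.  If the machine and the strategy form an
implementation system, then for any state `s`, if `⟦s⟧ ⇒ u` then there is a
state `s'` with `s (→o)* ; →β s'` and `⟦s'⟧ = u`. -/
theorem one_step_simulation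
    {Terms States : Type*}
    (betaT oT : States → States → Prop) (strat : Terms → Terms → Prop)
    (init : Terms → States → Prop) (rb : States → Terms)
    -- initialization constraint
    (hinit : ∀ t s, init t s → rb s = t)
    -- (1) overhead transparency
    (htransp : ∀ s s', oT s s' → rb s = rb s')
    -- (2) β-projection
    (hproj : ∀ s s', betaT s s' → strat (rb s) (rb s'))
    -- (3) overhead termination: no infinite `oT`-sequence
    (hterm : ¬ ∃ f : ℕ → States, ∀ n, oT (f n) (f (n + 1)))
    -- (4) β-reflection
    (hrefl : ∀ s u, (∀ s', ¬ oT s s') → strat (rb s) u →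
      ∃ s', betaT s s' ∧ rb s' = u) :
    ∀ (s : States) (u : Terms), strat (rb s) u →
      ∃ s', (∃ m, Relation.ReflTransGen oT s m ∧ betaT m s') ∧ rb s' = u := by
  have wf : WellFounded (fun a b => oT b a) := by
    by_contra hwf
    have ⟨x, hx⟩ : ∃ x, ¬Acc (fun a b => oT b a) x := by
      by_contra h; push_neg at h; exact hwf ⟨h⟩
    have step : ∀ y : {a // ¬Acc (fun a b => oT b a) a},
        ∃ z : {a // ¬Acc (fun a b => oT b a) a}, oT y.1 z.1 := by
      rintro ⟨y, hy⟩
      obtain ⟨z, hz, hr⟩ := exists_not_acc_lt_of_not_acc hy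
      exact ⟨⟨z, hz⟩, hr⟩
    choose g hg using step
    refine hterm ⟨fun n => (g^[n] ⟨x, hx⟩).1, fun n => ?_⟩
    simp only [Function.iterate_succ', Function.comp_apply]
    exact hg _
  intro s
  induction s using wf.induction with
  | _ s ih =>
    intro u hu
    by_cases hn : ∃ s₁, oT s s₁
    · obtain ⟨s₁, h1⟩ := hn
      obtain ⟨s', ⟨m, hm, hb⟩, hrb⟩ := ih s₁ h1 u (by rwa [← htransp s s₁ h1])
      exact ⟨s', ⟨m, Relation.ReflTransGen.head h1 hm, hb⟩, hrb⟩
    · push_neg at hn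
      obtain ⟨s', hb, hrb⟩ := hrefl s u hn hu
      exact ⟨s', ⟨s, Relation.ReflTransGen.refl, hb⟩, hrb⟩
end
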